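/- arXiv:1911.02486 — 4 statements merged into one kernel-verified Lean document; each statement's English description precedes it below -/
import Mathlib

section
/- Let (M_k) be a sequence of positive reals with M_0 = 1 satisfying M_k ≤ A H^k M_t M_{k−t} for all k ≥ t (with constants A ≥ 1, H > 0), and let M(r) = sup_k log(r^k/M_k) be its associated function (finite for r > 0). Then for every r, s > 0 and t ∈ ℕ: r^t · exp(−M(s·r)) ≤ A (H/s)^t M_t · exp(−M(s·r/H)). -/
theorem poly_times_neg_exp_assoc (M : ℕ → ℝ) (Mf : ℝ → ℝ)
    (A H : ℝ) (hA : 1 ≤ A) (hH : 0 < H)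
    (hpos : ∀ k, 0 < M k) (hM0 : M 0 = 1)
    (hstab : ∀ t k : ℕ, t ≤ k → M k ≤ A * H ^ k * (M t * M (k - t)))
    (hMf : ∀ r : ℝ, 0 < r →
      IsLUB (Set.range fun k : ℕ => Real.log (r ^ k / M k)) (Mf r)) :
    ∀ r s : ℝ, 0 < r → 0 < s → ∀ t : ℕ,
      r ^ t * Real.exp (-(Mf (s * r))) ≤
        A * (H / s) ^ t * M t * Real.exp (-(Mf (s * r / H))) := by
  intro r s hr hs t
  have hsr : 0 < s * r := mul_pos hs hr
  have hsrH : 0 < s * r / H := div_pos hsr hH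
  have hA0 : 0 < A := lt_of_lt_of_le one_pos hA
  set a := Mf (s * r) with ha
  set b := Mf (s * r / H) with hb
  have hKpos : 0 < A * (H / s) ^ t * M t * Real.exp a / r ^ t :=
    div_pos (mul_pos (mul_pos (mul_pos hA0 (pow_pos (div_pos hH hs) t)) (hpos t))
      (Real.exp_pos a)) (pow_pos hr t)
  have hb_le : b ≤ Real.log (A * (H / s) ^ t * M t * Real.exp a / r ^ t) := by
    apply (hMf _ hsrH).2
    rintro x ⟨k, rfl⟩
    simp only
    have hlhs : 0 < (s * r / H) ^ k / M k := div_pos (pow_pos hsrH k) (hpos k)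
    apply Real.log_le_log hlhs
    rw [div_le_div_iff₀ (hpos k) (by positivity : (0:ℝ) < r ^ t)]
    have hexp : (s * r) ^ (k + t) / M (k + t) ≤ Real.exp a := by
      have h1 : Real.log ((s * r) ^ (k + t) / M (k + t)) ≤ a :=
        (hMf _ hsr).1 ⟨k + t, rfl⟩
      calc (s * r) ^ (k + t) / M (k + t)
          = Real.exp (Real.log ((s * r) ^ (k + t) / M (k + t))) :=
            (Real.exp_log (div_pos (pow_pos hsr _) (hpos _))).symm
        _ ≤ Real.exp a := Real.exp_le_exp.2 h1
    have hst : M (k + t) ≤ A * H ^ (k + t) * (M t * M k) := by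
      have := hstab t (k + t) (by omega)
      rwa [Nat.add_sub_cancel] at this
    have hmid : (s * r) ^ (k + t) / (A * H ^ (k + t) * (M t * M k)) ≤ Real.exp a := by
      refine le_trans ?_ hexp
      exact div_le_div_of_nonneg_left (pow_pos hsr _).le (hpos _) hst
    have heq : (s * r / H) ^ k * r ^ t =
        A * (H / s) ^ t * M t *
          ((s * r) ^ (k + t) / (A * H ^ (k + t) * (M t * M k))) * M k := by
      field_simp [(hpos t).ne', (hpos k).ne', hA0.ne', hH.ne', hs.ne']
      rw [div_pow, div_pow, pow_add, pow_add]
      field_simp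
      ring
    rw [heq]
    have hc : 0 ≤ A * (H / s) ^ t * M t :=
      (mul_pos (mul_pos hA0 (pow_pos (div_pos hH hs) t)) (hpos t)).le
    calc A * (H / s) ^ t * M t *
          ((s * r) ^ (k + t) / (A * H ^ (k + t) * (M t * M k))) * M k
        ≤ A * (H / s) ^ t * M t * Real.exp a * M k := by
          apply mul_le_mul_of_nonneg_right _ (hpos k).le
          exact mul_le_mul_of_nonneg_left hmid hc
      _ = A * (H / s) ^ t * M t * Real.exp a * M k := rfl
  have hexpb : Real.exp b ≤ A * (H / s) ^ t * M t * Real.exp a / r ^ t := by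
    calc Real.exp b ≤ Real.exp (Real.log (A * (H / s) ^ t * M t * Real.exp a / r ^ t)) :=
          Real.exp_le_exp.2 hb_le
      _ = _ := Real.exp_log hKpos
  have hexpb' : Real.exp b * r ^ t ≤ A * (H / s) ^ t * M t * Real.exp a :=
    (le_div_iff₀ (pow_pos hr t)).1 hexpb
  rw [Real.exp_neg, Real.exp_neg, ← div_eq_mul_inv, ← div_eq_mul_inv,
    div_le_div_iff₀ (Real.exp_pos _) (Real.exp_pos _)]
  rw [mul_comm]
  exact hexpb'
end

section
/- Let (M_k) be a sequence of positive reals with M_0 = 1 satisfying M_{k+t} ≤ A H^{k+t} M_k M_t for all k, t ∈ ℕ (with A ≥ 1, H > 0), and let M(r) = sup_k log(r^k/M_k) be its associated function (finite for r > 0). Then for every r, s > 0 and t ∈ ℕ: r^t · exp(M(s·r)) ≤ A s^{−t} M_t · exp(M(H·s·r)). -/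
theorem poly_times_exp_assoc (M : ℕ → ℝ) (Mf : ℝ → ℝ)
    (A H : ℝ) (hA : 1 ≤ A) (hH : 0 < H)
    (hpos : ∀ k, 0 < M k) (hM0 : M 0 = 1)
    (hstab : ∀ k t : ℕ, M (k + t) ≤ A * H ^ (k + t) * (M k * M t))
    (hMf : ∀ r : ℝ, 0 < r →
      IsLUB (Set.range fun k : ℕ => Real.log (r ^ k / M k)) (Mf r)) :
    ∀ r s : ℝ, 0 < r → 0 < s → ∀ t : ℕ,
      r ^ t * Real.exp (Mf (s * r)) ≤
        A * s ^ (-(t : ℤ)) * M t * Real.exp (Mf (H * s * r)) := by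
  intro r s hr hs t
  have hA0 : (0:ℝ) < A := lt_of_lt_of_le one_pos hA
  have hsr : 0 < s * r := mul_pos hs hr
  have hHsr : 0 < H * s * r := mul_pos (mul_pos hH hs) hr
  have hMt := hpos t
  have hAMt : 0 < A * M t / (s*r)^t := by positivity
  set c := Real.log (A * M t / (s*r)^t) with hc
  have hub := (hMf (H*s*r) hHsr).1
  have key : Mf (s*r) ≤ c + Mf (H*s*r) := by
    apply (hMf (s*r) hsr).2
    rintro x ⟨k, rfl⟩
    have hMk := hpos k
    have hMkt := hpos (k+t)
    have heq : (A * M t / (s*r)^t) * ((H*s*r)^(k+t) / (A * H^(k+t) * (M k * M t)))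
        = (s*r)^k / M k := by
      have h2 : (H*s*r)^(k+t) = H^(k+t) * (s*r)^(k+t) := by
        rw [mul_assoc, mul_pow]
      rw [h2, pow_add]
      have hH0 : H ^ (k+t) ≠ 0 := by positivity
      field_simp
      ring
    have h1 : (s*r)^k / M k ≤ (A * M t / (s*r)^t) * ((H*s*r)^(k+t) / M (k+t)) := by
      rw [← heq]
      gcongr
      exact hstab k t
    calc Real.log ((s*r)^k / M k)
        ≤ Real.log ((A * M t / (s*r)^t) * ((H*s*r)^(k+t) / M (k+t))) :=
          Real.log_le_log (by positivity) h1
      _ = c + Real.log ((H*s*r)^(k+t) / M (k+t)) :=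
          Real.log_mul (ne_of_gt hAMt) (by positivity)
      _ ≤ c + Mf (H*s*r) := by
          have := hub ⟨k+t, rfl⟩
          linarith
  have hexp : Real.exp (Mf (s*r)) ≤ (A * M t / (s*r)^t) * Real.exp (Mf (H*s*r)) := by
    calc Real.exp (Mf (s*r)) ≤ Real.exp (c + Mf (H*s*r)) := Real.exp_le_exp.2 key
      _ = (A * M t / (s*r)^t) * Real.exp (Mf (H*s*r)) := by
          rw [Real.exp_add, hc, Real.exp_log hAMt]
  calc r^t * Real.exp (Mf (s*r))
      ≤ r^t * ((A * M t / (s*r)^t) * Real.exp (Mf (H*s*r))) :=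
        mul_le_mul_of_nonneg_left hexp (by positivity)
    _ = A * s ^ (-(t:ℤ)) * M t * Real.exp (Mf (H*s*r)) := by
        rw [zpow_neg, zpow_natCast]
        field_simp
        ring
end

section
/- Let (M_k) be a sequence of positive reals with M_0 = 1 satisfying M_{2k} ≤ A H^{2k} M_k^2 for all k (with A ≥ 1, H > 0), and let M(r) = sup_k log(r^k/M_k) be its associated function (finite for r > 0). Then for every q > 0 and every r ≥ 0: exp(−(1/2) M(q·r)) ≤ √A · exp(−M(q·r/H)). -/
theorem half_assoc_function_estimate (M : ℕ → ℝ) (Mf : ℝ → ℝ)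
    (A H : ℝ) (hA : 1 ≤ A) (hH : 0 < H)
    (hpos : ∀ k, 0 < M k) (hM0 : M 0 = 1)
    (hM2 : ∀ k : ℕ, M (2 * k) ≤ A * H ^ (2 * k) * (M k) ^ 2)
    (hMf0 : Mf 0 = 0)
    (hMf : ∀ r : ℝ, 0 < r →
      IsLUB (Set.range fun k : ℕ => Real.log (r ^ k / M k)) (Mf r)) :
    ∀ q : ℝ, 0 < q → ∀ r : ℝ, 0 ≤ r →
      Real.exp (-(1 / 2) * Mf (q * r)) ≤ Real.sqrt A * Real.exp (-(Mf (q * r / H))) := by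
  intro q hq r hr
  have hA0 : (0:ℝ) < A := lt_of_lt_of_le one_pos hA
  have hsqrt : Real.sqrt A = Real.exp (Real.log A / 2) := by
    rw [← Real.log_sqrt hA0.le, Real.exp_log (Real.sqrt_pos.mpr hA0)]
  have hlogA : 0 ≤ Real.log A := Real.log_nonneg hA
  -- reduce to a statement about Mf
  have key : Mf (q * r / H) ≤ Real.log A / 2 + Mf (q * r) / 2 := by
    rcases hr.eq_or_lt with h0 | h0
    · have hz : q * r = 0 := by rw [← h0]; ring
      rw [hz]
      simp [hMf0]
      linarith
    · have hs : 0 < q * r := mul_pos hq h0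
      have hsH : 0 < q * r / H := div_pos hs hH
      have hlub := hMf (q * r) hs
      have hlub' := hMf (q * r / H) hsH
      apply hlub'.2
      rintro _ ⟨k, rfl⟩
      simp only
      have hspow : 0 < (q * r) ^ (2 * k) := pow_pos hs _
      have hxpos : 0 < (q * r / H) ^ k / M k := div_pos (pow_pos hsH k) (hpos k)
      have hdpos : 0 < (q * r) ^ (2 * k) / M (2 * k) := div_pos hspow (hpos (2 * k))
      have hsq : ((q * r / H) ^ k / M k) ^ 2 ≤ A * ((q * r) ^ (2 * k) / M (2 * k)) := by
        have h1 : ((q * r / H) ^ k / M k) ^ 2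
            = (q * r) ^ (2 * k) / (H ^ (2 * k) * (M k) ^ 2) := by
          rw [div_pow, div_pow, pow_mul, pow_mul]
          field_simp
          ring
        rw [h1, mul_div_assoc', div_le_div_iff₀ (mul_pos (pow_pos hH _) (pow_pos (hpos k) 2)) (hpos (2 * k))]
        nlinarith [hM2 k, hspow.le, mul_le_mul_of_nonneg_left (hM2 k) hspow.le]
      have hmem : Real.log ((q * r) ^ (2 * k) / M (2 * k)) ≤ Mf (q * r) :=
        hlub.1 ⟨2 * k, rfl⟩
      have hlog : Real.log (((q * r / H) ^ k / M k) ^ 2) ≤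
          Real.log A + Real.log ((q * r) ^ (2 * k) / M (2 * k)) := by
        rw [← Real.log_mul hA0.ne' hdpos.ne']
        exact Real.log_le_log (by positivity) hsq
      rw [Real.log_pow] at hlog
      push_cast at hlog
      linarith
  rw [hsqrt, ← Real.exp_add, Real.exp_le_exp]
  linarith
end

section
/- Let α be an irrational real number such that for every N > 0 there exists C_N > 0 with |k + α m| ≥ C_N exp(−N(|k| + |m| + 1)^{1/s}) for all integers k, m with (k,m) ≠ (0,0) (i.e., α is not an exponential Liouville number of order s). Let a_0 = α. Then for every f in the Gevrey class of order s on 𝕋² whose Fourier coefficients f̂(k,m) vanish whenever k + α m = 0, there exists u in the Gevrey class of order s on 𝕋² with ∂_t u + α ∂_x u = f. Concretely: if |f̂(k,m)| ≤ C exp(−ε(|k|+|m|)^{1/s}) for some C, ε > 0 and f̂(k,m) = 0 when k + αm = 0, then u defined by û(k,m) = f̂(k,m)/(i(k + αm)) satisfies |û(k,m)| ≤ C' exp(−ε'(|k|+|m|)^{1/s}) for some C', ε' > 0. -/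
lemma gevrey_aux_subadd {a p : ℝ} (ha : 0 ≤ a) (hp0 : 0 ≤ p) (hp1 : p ≤ 1) :
    (a + 1) ^ p ≤ a ^ p + 1 := by
  have h := NNReal.rpow_add_le_add_rpow a.toNNReal 1 hp0 hp1
  have h' := NNReal.coe_le_coe.mpr h
  push_cast [NNReal.coe_rpow] at h'
  simpa [Real.coe_toNNReal a ha] using h'

theorem gevrey_solvability_torus (s : ℝ) (hs : 1 ≤ s) (α : ℝ) (hirr : Irrational α)
    (hdio : ∀ N : ℝ, 0 < N → ∃ C : ℝ, 0 < C ∧ ∀ k m : ℤ,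
      (k : ℝ) + α * m ≠ 0 →
        C * Real.exp (-N * (|(k : ℝ)| + |(m : ℝ)| + 1) ^ (1 / s)) ≤ |(k : ℝ) + α * m|)
    (fhat : ℤ → ℤ → ℂ) (C ε : ℝ) (hC : 0 < C) (hε : 0 < ε)
    (hf : ∀ k m : ℤ,
      ‖fhat k m‖ ≤ C * Real.exp (-ε * (|(k : ℝ)| + |(m : ℝ)|) ^ (1 / s)))
    (hvanish : ∀ k m : ℤ, (k : ℝ) + α * m = 0 → fhat k m = 0) :
    ∃ C' ε' : ℝ, 0 < C' ∧ 0 < ε' ∧ ∀ k m : ℤ,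
      ‖fhat k m / (Complex.I * (((k : ℝ) + α * m : ℝ) : ℂ))‖ ≤
        C' * Real.exp (-ε' * (|(k : ℝ)| + |(m : ℝ)|) ^ (1 / s)) := by
  obtain ⟨D, hD, hDio⟩ := hdio (ε / 2) (by positivity)
  refine ⟨C * Real.exp (ε / 2) / D, ε / 2, by positivity, by positivity, ?_⟩
  intro k m
  by_cases h : (k : ℝ) + α * m = 0
  · rw [hvanish k m h]
    simp only [zero_div, norm_zero]
    positivity
  · have hz := hDio k m h
    set X : ℝ := |(k : ℝ)| + |(m : ℝ)| with hX
    have hX0 : 0 ≤ X := by positivity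
    have hp0 : (0:ℝ) ≤ 1 / s := by positivity
    have hp1 : 1 / s ≤ 1 := by
      rw [div_le_one (by linarith)]; exact hs
    -- norm computation
    have hnorm : ‖fhat k m / (Complex.I * (((k : ℝ) + α * m : ℝ) : ℂ))‖
        = ‖fhat k m‖ / |(k : ℝ) + α * m| := by
      rw [norm_div, norm_mul, Complex.norm_I, one_mul, Complex.norm_real, Real.norm_eq_abs]
    rw [hnorm]
    have habs : 0 < |(k : ℝ) + α * m| := abs_pos.mpr h
    have hden : 0 < D * Real.exp (-(ε/2) * (X + 1) ^ (1 / s)) := by positivity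
    have hsub : (X + 1) ^ (1 / s) ≤ X ^ (1 / s) + 1 := gevrey_aux_subadd hX0 hp0 hp1
    have key : -ε * X ^ (1 / s) - (-(ε/2) * (X + 1) ^ (1 / s))
        ≤ ε / 2 + (-(ε/2) * X ^ (1 / s)) := by nlinarith [hε.le]
    calc ‖fhat k m‖ / |(k : ℝ) + α * m|
        ≤ (C * Real.exp (-ε * X ^ (1 / s))) / (D * Real.exp (-(ε/2) * (X + 1) ^ (1 / s))) :=
          div_le_div₀ (by positivity) (hf k m) hden hz
      _ = C / D * Real.exp (-ε * X ^ (1 / s) - (-(ε/2) * (X + 1) ^ (1 / s))) := by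
          rw [Real.exp_sub]; field_simp
      _ ≤ C / D * Real.exp (ε / 2 + (-(ε/2) * X ^ (1 / s))) := by
          have := Real.exp_le_exp.mpr key
          have hCD : (0:ℝ) ≤ C / D := by positivity
          exact mul_le_mul_of_nonneg_left this hCD
      _ = C * Real.exp (ε / 2) / D * Real.exp (-(ε/2) * X ^ (1 / s)) := by
          rw [Real.exp_add]; ring
end
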